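/- Let q = 2 and F(x,y) = y² + y + x³ + x + 1 (i.e. a₁ = a₂ = 0 and a₃ = a₄ = a₆ = 1 over F_2). Then every α ∈ O_∞ is (−2)-approximable: there exists a sequence f_n/g_n with f_n, g_n ∈ A, g_n ≠ 0, f_nA + g_nA = A, |α − f_n/g_n| < 4/|g_n|² for all n, and f_n/g_n → α in K_∞. (Sharp bound of the specific elliptic-curve computation in Example 8.7 of the paper.) -/

import Mathlib

/-!
At the point at infinity `x` and `y` have pole orders `2` and `3`, so the pole orders of the
nonzero elements of `A` are exactly `ℕ ∖ {1}`; and since the residue field is `𝔽₂`, two elements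
of the same valuation differ by an element of smaller valuation.

Dirichlet's pigeonhole argument: the `2ⁿ` sums of fixed elements of `A` of pole orders
`0, 2, …, n`, multiplied by `x ∈ K`, are expanded digit by digit; modulo `A` and modulo elements of
valuation at most `2^(1-n)` only the `n - 1` gap levels `1, -1, …, 2 - n` remain, so two
expansions agree there and their difference gives `g ≠ 0` with `|g| ≤ 2ⁿ`, `|g x - f| ≤ 2^(1-n)`.

The same descent on pole orders shows that `A` is a principal ideal domain, because
`y² + y = x³ + x + 1` has no point over `𝔽₂`. So `f / g` can be put in lowest terms without
increasing `|g|`, whence `|x - f / g| ≤ 2^(1-n) / |g| < 4 / |g|²`; density of `K` in `K_∞`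
carries this over to every `α ∈ O_∞`.
-/

open Filter Polynomial MeasureTheory
open scoped Multiplicative

local notation "ℤₘ₀" => WithZero (Multiplicative ℤ)

/-- The real absolute value attached to a `ℤₘ₀`-valued valuation with base `q`:
`Multiplicative.ofAdd n ↦ q ^ n` and `0 ↦ 0`. -/
noncomputable def zabs (q : ℕ) (x : ℤₘ₀) : ℝ :=
  if hx : x = 0 then 0 else (q : ℝ) ^ Multiplicative.toAdd (WithZero.unzero hx)

/-- The elliptic curve `y² + y = x³ + x + 1` over `F₂`. -/
def W2 : WeierstrassCurve (ZMod 2) := ⟨0, 0, 1, 1, 1⟩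

open WithZero

lemma WithZero.lt_exp_add_one_iff {x : ℤₘ₀} {k : ℤ} : x < exp (k + 1) ↔ x ≤ exp k := by
  rw [exp_add]; exact lt_mul_exp_iff_le exp_ne_zero

lemma zabs_eq_toNNReal {q : ℕ} (hq : (q : NNReal) ≠ 0) (x : ℤₘ₀) :
    zabs q x = WithZeroMulInt.toNNReal hq x := by
  rcases eq_or_ne x 0 with rfl | hx
  · simp [zabs]
  · rw [zabs, dif_neg hx, WithZeroMulInt.toNNReal_neg_apply hq hx]
    push_cast; rfl

lemma zabs_exp (q : ℕ) (k : ℤ) : zabs q (exp k) = (q : ℝ) ^ k := by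
  rw [zabs, dif_neg exp_ne_zero]; rfl

lemma zabs_strictMono {q : ℕ} (hq : 1 < q) : StrictMono (zabs q) := by
  have hq' : (1 : NNReal) < q := by exact_mod_cast hq
  intro x y hxy
  simp only [zabs_eq_toNNReal hq'.ne_bot]
  exact_mod_cast WithZeroMulInt.toNNReal_strictMono hq' hxy

lemma zabs_le_one_iff {q : ℕ} (hq : 1 < q) {x : ℤₘ₀} : zabs q x ≤ 1 ↔ x ≤ 1 := by
  rw [← (zabs_strictMono hq).le_iff_le, ← exp_zero, zabs_exp, zpow_zero]

lemma zabs_lt_sq_div_sq {q : ℕ} (hq : 1 < q) {x : ℤₘ₀} {e : ℤ} (h : x < exp (2 - 2 * e)) :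
    zabs q x < (q : ℝ) ^ 2 / zabs q (exp e) ^ 2 := by
  have hq0 : (q : ℝ) ≠ 0 := by positivity
  calc zabs q x < zabs q (exp (2 - 2 * e)) := zabs_strictMono hq h
    _ = (q : ℝ) ^ 2 / zabs q (exp e) ^ 2 := by
      rw [zabs_exp, zabs_exp, zpow_sub₀ hq0, ← zpow_natCast, ← zpow_natCast, ← zpow_mul, mul_comm]
      rfl

theorem Valuation.map_sub_lt_of_card_residueField_eq_two {K Γ₀ : Type*} [Field K]
    [LinearOrderedCommGroupWithZero Γ₀] {v : Valuation K Γ₀}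
    (hres : Nat.card (IsLocalRing.ResidueField v.valuationSubring) = 2) {z w : K}
    (hz : z ≠ 0) (h : v z = v w) : v (z - w) < v z := by
  have hw : w ≠ 0 := by rintro rfl; simp_all
  set O := v.valuationSubring
  have hequiv := v.isEquiv_valuation_valuationSubring
  have hu : v (z / w) = 1 := by rw [map_div₀, h, div_self (by simpa using hw)]
  let u : O := ⟨z / w, hu.le⟩
  have hunit : IsUnit u := (O.valuation_eq_one_iff u).mpr (hequiv.eq_one_iff_eq_one.mp hu)
  have hres1 : IsLocalRing.residue O u = 1 := by
    obtain ⟨y, -, hy⟩ := (Nat.card_eq_two_iff' (0 : IsLocalRing.ResidueField O)).mp hres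
    exact (hy _ (hunit.map _).ne_zero).trans (hy 1 one_ne_zero).symm
  have hmem : u - 1 ∈ IsLocalRing.maximalIdeal O := by
    rw [← IsLocalRing.residue_eq_zero_iff, _root_.map_sub, hres1, map_one, sub_self]
  have hlt : v (z / w - 1) < 1 :=
    hequiv.lt_one_iff_lt_one.mpr ((O.valuation_lt_one_iff _).mp hmem)
  calc v (z - w) = v w * v (z / w - 1) := by rw [← map_mul]; congr 1; field_simp
    _ < v w * 1 := mul_lt_mul_of_pos_left hlt (by simpa [zero_lt_iff] using hw)
    _ = v z := by rw [mul_one, h]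

section PolynomialValuation

variable {F L Γ₀ : Type*} [CommSemiring F] [CommRing L] [Algebra F L]
  [LinearOrderedCommGroupWithZero Γ₀] (v : Valuation L Γ₀) {x : L}

lemma Valuation.map_aeval_le_pow_natDegree (hc : ∀ c : F, v (algebraMap F L c) ≤ 1)
    (hx : 1 ≤ v x) (p : F[X]) : v (aeval x p) ≤ v x ^ p.natDegree := by
  rw [aeval_eq_sum_range]
  refine v.map_sum_le fun i hi => ?_
  rw [Algebra.smul_def, map_mul, map_pow]
  calc v (algebraMap F L (p.coeff i)) * v x ^ i ≤ 1 * v x ^ p.natDegree := by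
        gcongr
        · exact hc _
        · exact Nat.lt_succ_iff.mp (Finset.mem_range.mp hi)
    _ = v x ^ p.natDegree := one_mul _

lemma Valuation.map_aeval_eq_pow_natDegree (hc : ∀ c : F, c ≠ 0 → v (algebraMap F L c) = 1)
    (hx : 1 < v x) {p : F[X]} (hp : p ≠ 0) : v (aeval x p) = v x ^ p.natDegree := by
  have hc' (c : F) : v (algebraMap F L c) ≤ 1 := by
    by_cases h : c = 0 <;> simp [h, hc]
  have hlead : v (aeval x (C p.leadingCoeff * X ^ p.natDegree)) = v x ^ p.natDegree := by
    simp [hc _ (leadingCoeff_ne_zero.mpr hp)]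
  have hrest : v (aeval x p.eraseLead) < v x ^ p.natDegree := by
    rcases p.eraseLead_natDegree_lt_or_eraseLead_eq_zero with hlt | h0
    · exact (v.map_aeval_le_pow_natDegree hc' hx.le _).trans_lt (pow_lt_pow_right₀ hx hlt)
    · rw [h0, map_zero, map_zero]
      exact pow_pos (zero_lt_one.trans hx) _
  conv_lhs => rw [← p.eraseLead_add_C_mul_X_pow, map_add]
  rw [v.map_add_eq_of_lt_right (hlead ▸ hrest), hlead]

end PolynomialValuation

namespace Valuation

variable {R : Type*} [Ring R] (v : Valuation R ℤₘ₀) {b : ℤ → R} (hb : ∀ j, v (b j) = exp j)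
include hb

theorem exists_subset_Ioc_map_sub_sum_le
    (hred : ∀ z w : R, z ≠ 0 → v z = v w → v (z - w) < v z) (l : ℤ) (m : ℕ) {z : R}
    (hz : v z ≤ exp (l + m)) : ∃ S ⊆ Finset.Ioc l (l + m), v (z - ∑ j ∈ S, b j) ≤ exp l := by
  induction m generalizing z with
  | zero => exact ⟨∅, by simp, by simpa using hz⟩
  | succ m ih =>
    push_cast at hz
    rw [← add_assoc] at hz
    rcases hz.lt_or_eq with hlt | heq
    · obtain ⟨S, hS, hv⟩ := ih (WithZero.lt_exp_add_one_iff.mp hlt)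
      exact ⟨S, hS.trans (Finset.Ioc_subset_Ioc_right (by omega)), hv⟩
    · have hz0 : z ≠ 0 := by rintro rfl; simp at heq
      have hlt := hred z _ hz0 (heq.trans (hb (l + m + 1)).symm)
      rw [heq, WithZero.lt_exp_add_one_iff] at hlt
      obtain ⟨S, hS, hv⟩ := ih hlt
      have hnot : l + m + 1 ∉ S := fun h => by simpa using (Finset.mem_Ioc.mp (hS h)).2
      refine ⟨insert (l + m + 1) S, Finset.insert_subset (by simp)
        (hS.trans (Finset.Ioc_subset_Ioc_right (by omega))), ?_⟩
      rwa [Finset.sum_insert hnot, ← sub_sub]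

theorem map_sum_eq_exp_max' {S : Finset ℤ} (hS : S.Nonempty) :
    v (∑ j ∈ S, b j) = exp (S.max' hS) := by
  classical
  induction S using Finset.induction_on_max with
  | empty => simp at hS
  | insert a s ha ih =>
    have hmax : (insert a s).max' hS = a :=
      le_antisymm (Finset.max'_le _ _ _ fun y hy => by
        rcases Finset.mem_insert.mp hy with rfl | hy; exacts [le_rfl, (ha y hy).le])
        (Finset.le_max' _ a (Finset.mem_insert_self a s))
    rw [Finset.sum_insert fun h => (ha a h).false, hmax]
    rcases s.eq_empty_or_nonempty with rfl | hs
    · simp [hb]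
    · rw [v.map_add_eq_of_lt_left (by rw [ih hs, hb, exp_lt_exp]; exact ha _ (s.max'_mem hs)), hb]

theorem sum_ne_sum_of_ne {T₁ T₂ : Finset ℤ} (hne : T₁ ≠ T₂) :
    ∑ j ∈ T₁, b j ≠ ∑ j ∈ T₂, b j := by
  classical
  intro heq
  have hdiff : ∑ j ∈ T₁ \ T₂, b j = ∑ j ∈ T₂ \ T₁, b j := by
    have h₁ := Finset.sum_inter_add_sum_sdiff T₁ T₂ b
    have h₂ := Finset.sum_inter_add_sum_sdiff T₂ T₁ b
    rw [Finset.inter_comm] at h₂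
    exact add_left_cancel (h₁.trans (heq.trans h₂.symm))
  rcases (T₁ \ T₂).eq_empty_or_nonempty with h₁ | h₁ <;>
    rcases (T₂ \ T₁).eq_empty_or_nonempty with h₂ | h₂
  · exact hne (Finset.Subset.antisymm (Finset.sdiff_eq_empty_iff_subset.mp h₁)
      (Finset.sdiff_eq_empty_iff_subset.mp h₂))
  · simpa [h₁, v.map_sum_eq_exp_max' hb h₂] using (congrArg v hdiff).symm
  · simpa [h₂, v.map_sum_eq_exp_max' hb h₁] using congrArg v hdiff
  · have hmax : (T₁ \ T₂).max' h₁ = (T₂ \ T₁).max' h₂ := by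
      simpa [v.map_sum_eq_exp_max' hb h₁, v.map_sum_eq_exp_max' hb h₂] using congrArg v hdiff
    have hm₁ := Finset.mem_sdiff.mp ((T₁ \ T₂).max'_mem h₁)
    have hm₂ := Finset.mem_sdiff.mp ((T₂ \ T₁).max'_mem h₂)
    exact hm₂.2 (hmax ▸ hm₁.1)

end Valuation

theorem IsBezout.exists_isCoprime_mul_eq {R : Type*} [CommRing R] [IsDomain R] [IsBezout R]
    (f : R) {g : R} (hg : g ≠ 0) : ∃ c f' g', IsCoprime f' g' ∧ f = c * f' ∧ g = c * g' := by
  obtain ⟨f', hf'⟩ := IsBezout.gcd_dvd_left f g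
  obtain ⟨g', hg'⟩ := IsBezout.gcd_dvd_right f g
  obtain ⟨u, w, huw⟩ := IsBezout.gcd_eq_sum f g
  generalize IsBezout.gcd f g = c at *
  subst hf' hg'
  have hc : c ≠ 0 := left_ne_zero_of_mul hg
  exact ⟨c, f', g', ⟨u, w, mul_left_cancel₀ hc (by linear_combination huw)⟩, rfl, rfl⟩

/-- The levels in `(1 - n, n]` that are not pole orders of `A`. -/
noncomputable def gapLevels (n : ℕ) : Finset ℤ := insert 1 (Finset.Icc (2 - n : ℤ) (-1))

noncomputable def poleLevels (n : ℕ) : Finset ℤ := insert 0 (Finset.Icc 2 n)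

lemma mem_gapLevels {n : ℕ} {j : ℤ} : j ∈ gapLevels n ↔ j = 1 ∨ 2 - n ≤ j ∧ j ≤ -1 := by
  simp [gapLevels]

lemma mem_poleLevels {n : ℕ} {j : ℤ} : j ∈ poleLevels n ↔ j = 0 ∨ 2 ≤ j ∧ j ≤ n := by
  simp [poleLevels]

lemma card_gapLevels_lt_card_poleLevels {n : ℕ} (hn : 2 ≤ n) :
    (gapLevels n).card < (poleLevels n).card := by
  rw [gapLevels, poleLevels, Finset.card_insert_of_notMem (by simp),
    Finset.card_insert_of_notMem (by simp), Int.card_Icc, Int.card_Icc]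
  omega

section PoleOrders

-- `hred` is what a residue field `𝔽₂` gives; `hord` and `hreal` say that the pole orders of the
-- nonzero elements of `A` are exactly `ℕ ∖ {1}`.
variable {A K : Type*} [CommRing A] [Field K] [Algebra A K] {ν : Valuation K ℤₘ₀}
  (hred : ∀ z w : K, z ≠ 0 → ν z = ν w → ν (z - w) < ν z)
  (hord : ∀ a : A, a ≠ 0 → ∃ k : ℕ, k ≠ 1 ∧ ν (algebraMap A K a) = exp (k : ℤ))
  (hreal : ∀ k : ℕ, k ≠ 1 → ∃ a : A, ν (algebraMap A K a) = exp (k : ℤ))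

include hreal in
theorem exists_expansionBasis (hsurj : Function.Surjective ν) :
    ∃ b : ℤ → K, (∀ j, ν (b j) = exp j) ∧
      ∀ j, 0 ≤ j → j ≠ 1 → b j ∈ (algebraMap A K).range := by
  have (j : ℤ) : ∃ y : K, ν y = exp j ∧ (0 ≤ j → j ≠ 1 → y ∈ (algebraMap A K).range) := by
    by_cases hj : 0 ≤ j ∧ j ≠ 1
    · obtain ⟨a, ha⟩ := hreal j.toNat (by omega)
      exact ⟨_, by rwa [Int.toNat_of_nonneg hj.1] at ha, fun _ _ => ⟨a, rfl⟩⟩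
    · obtain ⟨y, hy⟩ := hsurj (exp j)
      exact ⟨y, hy, fun h₀ h₁ => (hj ⟨h₀, h₁⟩).elim⟩
  choose b hb using this
  exact ⟨b, fun j => (hb j).1, fun j => (hb j).2⟩

include hred

theorem exists_valuation_sub_algebraMap_sub_sum_le {b : ℤ → K} (hb : ∀ j, ν (b j) = exp j)
    (hbA : ∀ j, 0 ≤ j → j ≠ 1 → b j ∈ (algebraMap A K).range) {n : ℕ} (hn : 1 ≤ n) {z : K}
    (hz : ν z ≤ exp (n : ℤ)) :
    ∃ a : A, ∃ S ⊆ gapLevels n, ν (z - algebraMap A K a - ∑ j ∈ S, b j) ≤ exp (1 - n : ℤ) := by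
  classical
  obtain ⟨S, hS, hv⟩ := ν.exists_subset_Ioc_map_sub_sum_le hb hred (1 - n) (2 * n - 1)
    (z := z) (by convert hz using 2; omega)
  obtain ⟨a, ha⟩ : ∑ j ∈ S with 0 ≤ j ∧ j ≠ 1, b j ∈ (algebraMap A K).range :=
    Subring.sum_mem _ fun j hj => hbA j (Finset.mem_filter.mp hj).2.1 (Finset.mem_filter.mp hj).2.2
  refine ⟨a, {j ∈ S | ¬(0 ≤ j ∧ j ≠ 1)}, fun j hj => ?_, ?_⟩
  · have := Finset.mem_Ioc.mp (hS (Finset.mem_filter.mp hj).1)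
    have := (Finset.mem_filter.mp hj).2
    rw [mem_gapLevels]
    omega
  · rwa [ha, sub_sub, Finset.sum_filter_add_sum_filter_not]

include hreal in
theorem exists_valuation_mul_sub_le (hsurj : Function.Surjective ν) {x : K} (hx : ν x ≤ 1)
    {n : ℕ} (hn : 2 ≤ n) :
    ∃ f g : A, g ≠ 0 ∧ ν (algebraMap A K g) ≤ exp (n : ℤ) ∧
      ν (algebraMap A K g * x - algebraMap A K f) ≤ exp (1 - n : ℤ) := by
  classical
  obtain ⟨b, hb, hbA⟩ := exists_expansionBasis hreal hsurj
  let D := poleLevels n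
  have hD : ∀ j ∈ D, 0 ≤ j ∧ j ≠ 1 ∧ j ≤ n := fun j hj => by
    rw [mem_poleLevels] at hj
    omega
  have hsum_mem {T} (hT : T ⊆ D) : ∑ j ∈ T, b j ∈ (algebraMap A K).range :=
    Subring.sum_mem _ fun j hj => hbA j (hD j (hT hj)).1 (hD j (hT hj)).2.1
  have hsum_le {T} (hT : T ⊆ D) : ν (∑ j ∈ T, b j) ≤ exp (n : ℤ) :=
    ν.map_sum_le fun j hj => (hb j).trans_le (exp_le_exp.mpr (hD j (hT hj)).2.2)
  have hexp (T : Finset ℤ) : ∃ p : A × Finset ℤ, T ⊆ D →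
      p.2 ⊆ gapLevels n ∧
        ν ((∑ j ∈ T, b j) * x - algebraMap A K p.1 - ∑ j ∈ p.2, b j) ≤ exp (1 - n : ℤ) := by
    by_cases hT : T ⊆ D
    · obtain ⟨a, S, hS, hv⟩ := exists_valuation_sub_algebraMap_sub_sum_le hred hb hbA
        (by omega : 1 ≤ n) (z := (∑ j ∈ T, b j) * x) (by simpa using mul_le_mul' (hsum_le hT) hx)
      exact ⟨(a, S), fun _ => ⟨hS, hv⟩⟩
    · exact ⟨(0, ∅), fun h => (hT h).elim⟩
  choose p hp using hexp
  have hcard : (gapLevels n).powerset.card < D.powerset.card := by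
    simp only [Finset.card_powerset]
    exact Nat.pow_lt_pow_right one_lt_two (card_gapLevels_lt_card_poleLevels hn)
  obtain ⟨T₁, hT₁, T₂, hT₂, hne, hpeq⟩ := Finset.exists_ne_map_eq_of_card_lt_of_maps_to hcard
    (f := fun T => (p T).2) fun T hT => Finset.mem_powerset.mpr (hp T (Finset.mem_powerset.mp hT)).1
  rw [Finset.mem_powerset] at hT₁ hT₂
  obtain ⟨g, hg⟩ := Subring.sub_mem _ (hsum_mem hT₁) (hsum_mem hT₂)
  refine ⟨(p T₁).1 - (p T₂).1, g, ?_, ?_, ?_⟩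
  · rintro rfl
    exact ν.sum_ne_sum_of_ne hb hne (sub_eq_zero.mp (by simpa using hg.symm))
  · rw [hg]
    exact (ν.map_sub _ _).trans (max_le (hsum_le hT₁) (hsum_le hT₂))
  · have h₁ := (hp T₁ hT₁).2
    rw [show (p T₁).2 = (p T₂).2 from hpeq] at h₁
    rw [hg, map_sub (algebraMap A K)]
    convert (ν.map_sub _ _).trans (max_le h₁ (hp T₂ hT₂).2) using 2
    ring

section MinimalElement

variable {I : Ideal A} {b : A} {d : ℕ} (hbI : b ∈ I) (hb : ν (algebraMap A K b) = exp (d : ℤ))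
  (hmin : ∀ c ∈ I, c ≠ 0 → exp (d : ℤ) ≤ ν (algebraMap A K c))
include hbI hb

include hmin in
theorem mem_span_singleton_of_valuation_le {c : A} (hcI : c ∈ I)
    (hc : ν (algebraMap A K c) ≤ exp (d : ℤ)) : c ∈ Ideal.span {b} := by
  by_cases hcb : c = b
  · exact hcb ▸ Ideal.mem_span_singleton_self b
  by_cases hc0 : c = 0
  · exact hc0 ▸ zero_mem _
  have hcd := le_antisymm hc (hmin c hcI hc0)
  have hlt := hred _ (algebraMap A K b) (by simp [hcd, ← ν.ne_zero_iff]) (hcd.trans hb.symm)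
  rw [← map_sub, hcd] at hlt
  exact absurd (hmin _ (I.sub_mem hcI hbI) (sub_ne_zero.mpr hcb)) hlt.not_ge

include hord hreal in
theorem exists_sub_mem_span_singleton_valuation_le {c : A} (hcI : c ∈ I) :
    ∃ c' ∈ I, c - c' ∈ Ideal.span {b} ∧ ν (algebraMap A K c') ≤ exp (d + 1 : ℤ) := by
  suffices ∀ N : ℕ, ∀ c ∈ I, ν (algebraMap A K c) ≤ exp (N : ℤ) →
      ∃ c' ∈ I, c - c' ∈ Ideal.span {b} ∧ ν (algebraMap A K c') ≤ exp (d + 1 : ℤ) by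
    by_cases hc0 : c = 0
    · exact ⟨c, hcI, by simp, by simp [hc0]⟩
    obtain ⟨k, -, hk⟩ := hord c hc0
    exact this k c hcI hk.le
  intro N
  induction N with
  | zero => exact fun c hcI hc => ⟨c, hcI, by simp, hc.trans (exp_le_exp.mpr (by omega))⟩
  | succ N ih =>
    intro c hcI hc
    by_cases hcd : ν (algebraMap A K c) ≤ exp (d + 1 : ℤ)
    · exact ⟨c, hcI, by simp, hcd⟩
    have hc0 : c ≠ 0 := by rintro rfl; simp at hcd
    obtain ⟨k, -, hk⟩ := hord c hc0
    rw [hk, exp_le_exp] at hcd hc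
    obtain ⟨q, hq⟩ := hreal (k - d) (by omega)
    have hqb : ν (algebraMap A K (q * b)) = ν (algebraMap A K c) := by
      rw [map_mul, map_mul, hq, hb, hk, ← exp_add]; congr 1; omega
    have hlt := hred _ _ (by simp [hk, ← ν.ne_zero_iff]) hqb.symm
    rw [← map_sub, hk, show (k : ℤ) = (k - 1 : ℤ) + 1 by ring, lt_exp_add_one_iff] at hlt
    obtain ⟨c', hc'I, hcc', hc'⟩ := ih (c - q * b) (I.sub_mem hcI (I.mul_mem_left q hbI))
      (hlt.trans (exp_le_exp.mpr (by omega)))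
    refine ⟨c', hc'I, ?_, hc'⟩
    have hqb_mem : q * b ∈ Ideal.span {b} :=
      Ideal.mul_mem_left _ q (Ideal.mem_span_singleton_self b)
    simpa [sub_right_comm] using (Ideal.span {b}).add_mem hcc' hqb_mem

include hmin hord hreal in
/-- If `I ∋ a` had pole order `d + 1`, then by the descent every `r * a` would be congruent to
`0` or `a` modulo `b`, i.e. `A` would have a quotient `𝔽₂`. -/
theorem valuation_ne_exp_add_one (hpt : ∀ J : Ideal A, (∀ r, r ∈ J ∨ r - 1 ∈ J) → J = ⊤) {a : A}
    (haI : a ∈ I) : ν (algebraMap A K a) ≠ exp (d + 1 : ℤ) := by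
  intro ha
  let J : Ideal A := Submodule.comap (LinearMap.mulRight A a) (Ideal.span {b})
  have hJ (r : A) : r ∈ J ∨ r - 1 ∈ J := by
    obtain ⟨c, hcI, hrc, hc⟩ :=
      exists_sub_mem_span_singleton_valuation_le hred hord hreal hbI hb (I.mul_mem_left r haI)
    simp only [J, Submodule.mem_comap, LinearMap.mulRight_apply, sub_mul, one_mul]
    rcases hc.lt_or_eq with hlt | heq
    · have hcb :=
        mem_span_singleton_of_valuation_le hred hbI hb hmin hcI (lt_exp_add_one_iff.mp hlt)
      exact .inl (by simpa using (Ideal.span {b}).add_mem hrc hcb)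
    · have hlt : ν (algebraMap A K (c - a)) < exp (d + 1 : ℤ) := by
        rw [map_sub, ← heq]
        exact hred _ _ (by simp [heq, ← ν.ne_zero_iff]) (heq.trans ha.symm)
      have hcb := mem_span_singleton_of_valuation_le hred hbI hb hmin (I.sub_mem hcI haI)
        (lt_exp_add_one_iff.mp hlt)
      exact .inr (by simpa using (Ideal.span {b}).add_mem hrc hcb)
  have h1 : (1 : A) ∈ J := (hpt J hJ).symm ▸ Submodule.mem_top
  obtain ⟨s, rfl⟩ := Ideal.mem_span_singleton'.mp (by simpa [J] using h1)
  obtain ⟨k, hk1, hk⟩ := hord s (by rintro rfl; simp at ha)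
  rw [map_mul, map_mul, hk, hb, ← exp_add, exp_inj] at ha
  omega

end MinimalElement

include hord hreal in
theorem isPrincipalIdealRing_of_valuation
    (hpt : ∀ J : Ideal A, (∀ r, r ∈ J ∨ r - 1 ∈ J) → J = ⊤) : IsPrincipalIdealRing A := by
  classical
  refine ⟨fun I => ?_⟩
  by_cases hI : I = ⊥
  · exact hI ▸ bot_isPrincipal
  obtain ⟨c, hcI, hc0⟩ := Submodule.exists_mem_ne_zero_of_ne_bot hI
  have hex : ∃ d : ℕ, ∃ b ∈ I, ν (algebraMap A K b) = exp (d : ℤ) := by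
    obtain ⟨k, -, hk⟩ := hord c hc0
    exact ⟨k, c, hcI, hk⟩
  obtain ⟨b, hbI, hb⟩ := Nat.find_spec hex
  have hmin : ∀ c ∈ I, c ≠ 0 → exp (Nat.find hex : ℤ) ≤ ν (algebraMap A K c) := fun c hcI hc0 => by
    obtain ⟨k, -, hk⟩ := hord c hc0
    exact hk ▸ exp_le_exp.mpr (by exact_mod_cast Nat.find_min' hex ⟨c, hcI, hk⟩)
  refine ⟨b, le_antisymm (fun c hcI => ?_) ((Ideal.span_singleton_le_iff_mem I).mpr hbI)⟩
  obtain ⟨c', hc'I, hcc', hc'⟩ :=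
    exists_sub_mem_span_singleton_valuation_le hred hord hreal hbI hb hcI
  have hc'b := mem_span_singleton_of_valuation_le hred hbI hb hmin hc'I (lt_exp_add_one_iff.mp
    (hc'.lt_of_ne (valuation_ne_exp_add_one hred hord hreal hbI hb hmin hpt hc'I)))
  simpa using (Ideal.span {b}).add_mem hcc' hc'b

include hord hreal in
theorem exists_isCoprime_valuation_sub_div_le [IsDomain A] [IsBezout A]
    (hsurj : Function.Surjective ν) {x : K} (hx : ν x ≤ 1) {n : ℕ} (hn : 2 ≤ n) :
    ∃ f g : A, g ≠ 0 ∧ IsCoprime f g ∧ ∃ e : ℕ, e ≤ n ∧ ν (algebraMap A K g) = exp (e : ℤ) ∧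
      ν (x - algebraMap A K f / algebraMap A K g) ≤ exp (1 - n - e : ℤ) := by
  obtain ⟨f₀, g₀, hg₀, hg₀n, hfg₀⟩ := exists_valuation_mul_sub_le hred hreal hsurj hx hn
  obtain ⟨c, f, g, hcop, rfl, rfl⟩ := IsBezout.exists_isCoprime_mul_eq f₀ hg₀
  obtain ⟨kc, -, hkc⟩ := hord c (left_ne_zero_of_mul hg₀)
  obtain ⟨e, -, he⟩ := hord g (right_ne_zero_of_mul hg₀)
  have hcg : ν (algebraMap A K (c * g)) = exp (kc + e : ℤ) := by
    rw [map_mul, map_mul, hkc, he, exp_add]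
  have hcg0 : algebraMap A K c * algebraMap A K g ≠ 0 := fun h => by simp [h] at hcg
  refine ⟨f, g, right_ne_zero_of_mul hg₀, hcop, e, ?_, he, ?_⟩
  · rw [hcg, exp_le_exp] at hg₀n
    omega
  · have hdiv : x - algebraMap A K f / algebraMap A K g =
        (algebraMap A K (c * g) * x - algebraMap A K (c * f)) / algebraMap A K (c * g) := by
      rw [map_mul, map_mul]
      field_simp [left_ne_zero_of_mul hcg0, right_ne_zero_of_mul hcg0]
    rw [hdiv, map_div₀, hcg, div_le_iff₀ exp_pos, ← exp_add]
    exact hfg₀.trans (exp_le_exp.mpr (by omega))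

end PoleOrders

section Completion

open UniformSpace

lemma Valued.setOf_valuation_sub_lt_mem_nhds {R : Type*} [Ring R] [Valued R ℤₘ₀]
    (hsurj : Function.Surjective (Valued.v : Valuation R ℤₘ₀)) (x : R) (γ : ℤ) :
    {y | Valued.v (y - x) < exp γ} ∈ nhds x := by
  obtain ⟨r, hr⟩ := hsurj (exp γ)
  refine Valued.mem_nhds.mpr ⟨Units.mk0 (Valued.v.restrict r) (by simp [hr]), fun y hy => ?_⟩
  simpa [hr] using hy

lemma Valued.tendsto_of_valuation_sub_lt {R : Type*} [Ring R] [Valued R ℤₘ₀] {u : ℕ → R} {x : R}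
    (h : ∀ n : ℕ, Valued.v (x - u n) < exp (-n : ℤ)) : Tendsto u atTop (nhds x) := by
  intro s hs
  obtain ⟨γ, hγ⟩ := Valued.mem_nhds.mp hs
  have hγ0 : MonoidWithZeroHom.ValueGroup₀.embedding γ.1 ≠ 0 :=
    (_root_.map_ne_zero _).mpr γ.ne_zero
  refine Filter.mem_map.mpr (Filter.eventually_atTop.mpr
    ⟨(-log (MonoidWithZeroHom.ValueGroup₀.embedding γ.1)).toNat, fun n hn => hγ ?_⟩)
  rw [Set.mem_ofPred_eq, Valuation.restrict_lt_iff_lt_embedding, Valuation.map_sub_swap]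
  exact (h n).trans_le ((le_log_iff_exp_le hγ0).mp (by omega))

variable {A K : Type*} [CommRing A] [IsDomain A] [IsBezout A] [Field K] [Algebra A K]
  [Valued K ℤₘ₀]

theorem exists_isCoprime_valuation_sub_coe_div_lt
    (hred : ∀ z w : K, z ≠ 0 → Valued.v z = Valued.v w → Valued.v (z - w) < Valued.v z)
    (hord : ∀ a : A, a ≠ 0 → ∃ k : ℕ, k ≠ 1 ∧ Valued.v (algebraMap A K a) = exp (k : ℤ))
    (hreal : ∀ k : ℕ, k ≠ 1 → ∃ a : A, Valued.v (algebraMap A K a) = exp (k : ℤ))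
    (hsurj : Function.Surjective (Valued.v : Valuation K ℤₘ₀))
    {α : Completion K} (hα : Valued.v α ≤ 1) (N : ℕ) :
    ∃ f g : A, g ≠ 0 ∧ IsCoprime f g ∧ ∃ e : ℕ, Valued.v (algebraMap A K g) = exp (e : ℤ) ∧
      Valued.v (α - ↑(algebraMap A K f / algebraMap A K g)) < exp (2 - 2 * e : ℤ) ∧
      Valued.v (α - ↑(algebraMap A K f / algebraMap A K g)) < exp (-N : ℤ) := by
  obtain ⟨x, hx⟩ := Completion.denseRange_coe.mem_nhds (Valued.setOf_valuation_sub_lt_mem_nhds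
    (Valued.valuedCompletion_surjective_iff.mpr hsurj) α (-3 * (N + 2)))
  rw [Set.mem_ofPred_eq, Valuation.map_sub_swap] at hx
  have hx1 : Valued.v x ≤ 1 := by
    rw [← Valued.valuedCompletion_apply, ← sub_sub_cancel α x]
    exact (Valued.v.map_sub _ _).trans
      (max_le hα (hx.le.trans (exp_le_exp.mpr (by omega)) |>.trans_eq exp_zero))
  obtain ⟨f, g, hg, hcop, e, hen, he, hfg⟩ :=
    exists_isCoprime_valuation_sub_div_le hred hord hreal hsurj hx1 (n := N + 2) (by omega)
  have hle : Valued.v (α - ↑(algebraMap A K f / algebraMap A K g)) ≤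
      max (exp (-3 * (N + 2) : ℤ)) (exp (1 - (N + 2 : ℕ) - e : ℤ)) := by
    rw [← sub_add_sub_cancel α (x : Completion K), ← Completion.coe_sub]
    refine (Valued.v.map_add _ _).trans (max_le_max hx.le ?_)
    rw [Valued.valuedCompletion_apply]
    exact hfg
  refine ⟨f, g, hg, hcop, e, he, hle.trans_lt (max_lt ?_ ?_), hle.trans_lt (max_lt ?_ ?_)⟩ <;>
    exact exp_lt_exp.mpr (by omega)

end Completion

open WeierstrassCurve.Affine

namespace W2

local notation "𝒪" => W2.toAffine.CoordinateRing
local notation "𝒦" => W2.toAffine.FunctionField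

noncomputable def xCoord : 𝒪 := CoordinateRing.mk W2.toAffine (C X)

noncomputable def yCoord : 𝒪 := CoordinateRing.mk W2.toAffine X

lemma yCoord_sq_add_yCoord : yCoord ^ 2 + yCoord = xCoord ^ 3 + xCoord + 1 := by
  have h : CoordinateRing.mk W2.toAffine
      (X ^ 2 + C (C 0 * X + C 1) * X - C (X ^ 3 + C 0 * X ^ 2 + C 1 * X + C 1)) = 0 :=
    AdjoinRoot.mk_self
  simp only [zero_mul, zero_add, one_mul, map_sub, map_add, map_pow, map_zero, add_zero,
    map_one, sub_eq_zero] at h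
  exact h

lemma aeval_xCoord (p : (ZMod 2)[X]) : aeval xCoord p = p • (1 : 𝒪) := by
  rw [← Algebra.algebraMap_eq_smul_one]
  show aeval (algebraMap (ZMod 2)[X] _ X) p = _
  rw [aeval_algebraMap_apply, aeval_X_left_apply]

lemma two_eq_zero : (2 : 𝒪) = 0 := by
  rw [← map_ofNat (algebraMap (ZMod 2) 𝒪) 2, show (2 : ZMod 2) = 0 from rfl, map_zero]

lemma xCoord_ne_algebraMap (c : ZMod 2) : xCoord ≠ algebraMap (ZMod 2) 𝒪 c := by
  intro h
  have := CoordinateRing.smul_basis_eq_zero (p := X - C c) (q := 0) (W' := W2.toAffine) (by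
    rw [zero_smul, add_zero, ← aeval_xCoord]
    simp [h])
  exact X_sub_C_ne_zero c this.1

lemma yCoord_ne_algebraMap (c : ZMod 2) : yCoord ≠ algebraMap (ZMod 2) 𝒪 c := by
  intro h
  have := CoordinateRing.smul_basis_eq_zero (p := - C c) (q := 1) (W' := W2.toAffine) (by
    rw [one_smul, ← yCoord, h, ← aeval_xCoord]
    simp)
  exact one_ne_zero this.2

/-- An ideal with `𝒪 ⧸ J = 𝔽₂` would be an `𝔽₂`-point of `W2`, and `W2` has none. -/
lemma eq_top_of_forall_mem_or_sub_one_mem (J : Ideal 𝒪)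
    (hJ : ∀ r, r ∈ J ∨ r - 1 ∈ J) : J = ⊤ := by
  rw [Ideal.eq_top_iff_one, ← Ideal.Quotient.eq_zero_iff_mem, map_one]
  have h01 (r) : Ideal.Quotient.mk J r = 0 ∨ Ideal.Quotient.mk J r = 1 := by
    simpa [Ideal.Quotient.eq_zero_iff_mem, sub_eq_zero] using
      (hJ r).imp Ideal.Quotient.eq_zero_iff_mem.mpr Ideal.Quotient.eq_zero_iff_mem.mpr
  have h2 : (2 : 𝒪 ⧸ J) = 0 := by
    rw [← map_ofNat (Ideal.Quotient.mk J) 2, two_eq_zero, map_zero]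
  have hrel := congrArg (Ideal.Quotient.mk J) yCoord_sq_add_yCoord
  simp only [map_add, map_pow, map_one] at hrel
  rcases h01 xCoord with hx | hx <;> rcases h01 yCoord with hy | hy <;> rw [hx, hy] at hrel
  · linear_combination -hrel
  · linear_combination -hrel + h2
  · linear_combination hrel + 2 * h2
  · linear_combination -hrel

section Valuation

variable {ν : Valuation 𝒦 ℤₘ₀}
  (hneg : ∀ a : 𝒪, (∀ c : ZMod 2, a ≠ algebraMap (ZMod 2) _ c) → 1 < ν (algebraMap 𝒪 𝒦 a))
include hneg

lemma valuation_aeval_eq_pow_natDegree {x : 𝒪} (hx : ∀ c : ZMod 2, x ≠ algebraMap (ZMod 2) _ c)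
    {p : (ZMod 2)[X]} (hp : p ≠ 0) :
    ν (algebraMap 𝒪 𝒦 (aeval x p)) = ν (algebraMap 𝒪 𝒦 x) ^ p.natDegree := by
  rw [← aeval_algebraMap_apply]
  refine ν.map_aeval_eq_pow_natDegree (fun c hc => ?_) (hneg x hx) hp
  rw [(by decide : ∀ c : ZMod 2, c ≠ 0 → c = 1) c hc, map_one, map_one]

lemma valuation_xCoord_pow_three :
    ν (algebraMap 𝒪 𝒦 xCoord) ^ 3 = ν (algebraMap 𝒪 𝒦 yCoord) ^ 2 := by
  have hdegY : (X ^ 2 + X : (ZMod 2)[X]).natDegree = 2 := by compute_degree!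
  have hdegX : (X ^ 3 + X + 1 : (ZMod 2)[X]).natDegree = 3 := by compute_degree!
  have hY := valuation_aeval_eq_pow_natDegree hneg yCoord_ne_algebraMap
    (ne_zero_of_natDegree_gt (n := 0) (by rw [hdegY]; norm_num))
  have hX := valuation_aeval_eq_pow_natDegree hneg xCoord_ne_algebraMap
    (ne_zero_of_natDegree_gt (n := 0) (by rw [hdegX]; norm_num))
  rw [hdegY] at hY
  rw [hdegX] at hX
  rw [← hX, ← hY]
  simp [yCoord_sq_add_yCoord]

lemma valuation_smul_one {p : (ZMod 2)[X]} (hp : p ≠ 0) :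
    ν (algebraMap 𝒪 𝒦 (p • 1)) = ν (algebraMap 𝒪 𝒦 xCoord) ^ p.natDegree := by
  rw [← aeval_xCoord, valuation_aeval_eq_pow_natDegree hneg xCoord_ne_algebraMap hp]

lemma exists_valuation_eq_exp_mul {m : ℤ} (hm : 0 < m)
    (hx : ν (algebraMap 𝒪 𝒦 xCoord) = exp (2 * m)) (hy : ν (algebraMap 𝒪 𝒦 yCoord) = exp (3 * m))
    {a : 𝒪} (ha : a ≠ 0) : ∃ k : ℕ, k ≠ 1 ∧ ν (algebraMap 𝒪 𝒦 a) = exp (m * k) := by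
  obtain ⟨p, q, rfl⟩ : ∃ p q : (ZMod 2)[X], p • 1 + q • yCoord = a :=
    CoordinateRing.exists_smul_basis_eq a
  have hp (hp : p ≠ 0) : ν (algebraMap 𝒪 𝒦 (p • 1)) = exp (m * (2 * p.natDegree : ℕ)) := by
    rw [valuation_smul_one hneg hp, hx, ← exp_nsmul]; congr 1; push_cast; ring
  have hq (hq : q ≠ 0) :
      ν (algebraMap 𝒪 𝒦 (q • yCoord)) = exp (m * (2 * q.natDegree + 3 : ℕ)) := by
    rw [← smul_one_mul, map_mul, map_mul, valuation_smul_one hneg hq, hx, hy, ← exp_nsmul,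
      ← exp_add]
    congr 1; push_cast; ring
  by_cases hq0 : q = 0
  · have hp0 : p ≠ 0 := by rintro rfl; simp [hq0] at ha
    exact ⟨2 * p.natDegree, by omega, by simpa [hq0] using hp hp0⟩
  by_cases hp0 : p = 0
  · exact ⟨2 * q.natDegree + 3, by omega, by simpa [hp0] using hq hq0⟩
  -- the two pole orders have different parity
  have hne : ν (algebraMap 𝒪 𝒦 (p • 1)) ≠ ν (algebraMap 𝒪 𝒦 (q • yCoord)) := by
    rw [hp hp0, hq hq0, Ne, exp_inj]
    intro h
    have := mul_left_cancel₀ hm.ne' h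
    omega
  rw [map_add, ν.map_add_of_distinct_val hne]
  rcases max_choice (ν (algebraMap 𝒪 𝒦 (p • 1))) (ν (algebraMap 𝒪 𝒦 (q • yCoord))) with h | h <;>
    rw [h]
  exacts [⟨2 * p.natDegree, by omega, hp hp0⟩, ⟨2 * q.natDegree + 3, by omega, hq hq0⟩]

lemma valuation_xCoord_yCoord (hsurj : Function.Surjective ν) :
    ν (algebraMap 𝒪 𝒦 xCoord) = exp 2 ∧ ν (algebraMap 𝒪 𝒦 yCoord) = exp 3 := by
  have hX := hneg _ xCoord_ne_algebraMap
  have hY := hneg _ yCoord_ne_algebraMap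
  obtain ⟨kX, hkX⟩ : ∃ k, ν (algebraMap 𝒪 𝒦 xCoord) = exp k :=
    ⟨_, (exp_log (zero_lt_one.trans hX).ne').symm⟩
  obtain ⟨kY, hkY⟩ : ∃ k, ν (algebraMap 𝒪 𝒦 yCoord) = exp k :=
    ⟨_, (exp_log (zero_lt_one.trans hY).ne').symm⟩
  have hrel := valuation_xCoord_pow_three hneg
  rw [hkX, hkY, ← exp_nsmul, ← exp_nsmul, exp_inj, nsmul_eq_mul, nsmul_eq_mul] at hrel
  push_cast at hrel
  rw [hkX, ← exp_zero, exp_lt_exp] at hX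
  set m := kY - kX
  have hx : ν (algebraMap 𝒪 𝒦 xCoord) = exp (2 * m) := by rw [hkX]; congr 1; omega
  have hy : ν (algebraMap 𝒪 𝒦 yCoord) = exp (3 * m) := by rw [hkY]; congr 1; omega
  have hm : 0 < m := by omega
  -- all values of `A ∖ {0}`, hence of `K = Frac A`, lie in `exp (m ℤ)`, but `exp 1` is a value
  obtain ⟨z, hz⟩ := hsurj (exp 1)
  obtain ⟨f, g, hg, rfl⟩ := IsFractionRing.div_surjective (A := 𝒪) z
  have hf : f ≠ 0 := by rintro rfl; simpa using hz.symm
  obtain ⟨kf, -, hkf⟩ := exists_valuation_eq_exp_mul hneg hm hx hy hf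
  obtain ⟨kg, -, hkg⟩ := exists_valuation_eq_exp_mul hneg hm hx hy (nonZeroDivisors.ne_zero hg)
  rw [map_div₀, hkf, hkg, ← exp_sub, exp_inj] at hz
  have hm1 : m = 1 := Int.eq_one_of_mul_eq_one_right hm.le (b := kf - kg) (by linear_combination hz)
  rw [hx, hy, hm1]
  simp

lemma exists_valuation_eq_natCast (hsurj : Function.Surjective ν) {a : 𝒪} (ha : a ≠ 0) :
    ∃ k : ℕ, k ≠ 1 ∧ ν (algebraMap 𝒪 𝒦 a) = exp (k : ℤ) := by
  obtain ⟨hx, hy⟩ := valuation_xCoord_yCoord hneg hsurj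
  simpa using exists_valuation_eq_exp_mul hneg one_pos (by simpa using hx) (by simpa using hy) ha

lemma exists_valuation_eq_of_ne_one (hsurj : Function.Surjective ν) {k : ℕ} (hk : k ≠ 1) :
    ∃ a : 𝒪, ν (algebraMap 𝒪 𝒦 a) = exp (k : ℤ) := by
  obtain ⟨hx, hy⟩ := valuation_xCoord_yCoord hneg hsurj
  obtain ⟨i, rfl | rfl⟩ := Nat.even_or_odd' k
  · refine ⟨xCoord ^ i, ?_⟩
    rw [map_pow, map_pow, hx, ← exp_nsmul]
    congr 1; push_cast; ring
  · obtain ⟨j, rfl⟩ := Nat.exists_eq_add_of_le' (Nat.pos_of_ne_zero (by omega : i ≠ 0))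
    refine ⟨xCoord ^ j * yCoord, ?_⟩
    rw [map_mul, map_mul, map_pow, map_pow, hx, hy, ← exp_nsmul, ← exp_add]
    congr 1; push_cast; ring

end Valuation

end W2

theorem neg_two_approximable_explicit_elliptic_general
    (ν : Valuation W2.toAffine.FunctionField ℤₘ₀)
    (hsurj : Function.Surjective ν)
    (hneg : ∀ a : W2.toAffine.CoordinateRing, (∀ c : ZMod 2, a ≠ algebraMap (ZMod 2) _ c) →
      1 < ν (algebraMap W2.toAffine.CoordinateRing W2.toAffine.FunctionField a))
    (hres : Nat.card (IsLocalRing.ResidueField ν.valuationSubring) = 2) :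
    letI : Valued W2.toAffine.FunctionField ℤₘ₀ := Valued.mk' ν
    letI : Valued (UniformSpace.Completion W2.toAffine.FunctionField) ℤₘ₀ :=
      Valued.valuedCompletion
    ∀ α : UniformSpace.Completion W2.toAffine.FunctionField,
      zabs 2 (Valued.v α) ≤ 1 →
      ∃ f g : ℕ → W2.toAffine.CoordinateRing,
        (∀ n, g n ≠ 0 ∧
          Ideal.span {f n, g n} = (⊤ : Ideal W2.toAffine.CoordinateRing) ∧
          zabs 2 (Valued.v (α -
            (UniformSpace.Completion.coe' (α := W2.toAffine.FunctionField)
              (algebraMap W2.toAffine.CoordinateRing W2.toAffine.FunctionField (f n) /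
                algebraMap W2.toAffine.CoordinateRing W2.toAffine.FunctionField (g n))))) <
            (4 : ℝ) /
              zabs 2 (ν (algebraMap W2.toAffine.CoordinateRing W2.toAffine.FunctionField
                (g n))) ^ 2) ∧
        Tendsto (fun n => UniformSpace.Completion.coe' (α := W2.toAffine.FunctionField)
            (algebraMap W2.toAffine.CoordinateRing W2.toAffine.FunctionField (f n) /
              algebraMap W2.toAffine.CoordinateRing W2.toAffine.FunctionField (g n)))
          atTop (nhds α) := by
  let : Valued W2.toAffine.FunctionField ℤₘ₀ := Valued.mk' ν
  intro α hα
  have hred (z w) (hz : z ≠ 0) (h : ν z = ν w) : ν (z - w) < ν z :=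
    Valuation.map_sub_lt_of_card_residueField_eq_two hres hz h
  have hord a (ha : a ≠ 0) := W2.exists_valuation_eq_natCast hneg hsurj ha
  have hreal k (hk : k ≠ 1) := W2.exists_valuation_eq_of_ne_one hneg hsurj hk
  have := isPrincipalIdealRing_of_valuation hred hord hreal W2.eq_top_of_forall_mem_or_sub_one_mem
  choose f g hg hcop e he happrox hconv using exists_isCoprime_valuation_sub_coe_div_lt
    hred hord hreal hsurj ((zabs_le_one_iff one_lt_two).mp hα)
  refine ⟨f, g, fun n => ⟨hg n, Ideal.eq_top_iff_one _ |>.mpr (Ideal.mem_span_pair.mpr (hcop n)),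
    ?_⟩, Valued.tendsto_of_valuation_sub_lt hconv⟩
  rw [show ν _ = exp _ from he n]
  have := zabs_lt_sq_div_sq one_lt_two (happrox n)
  norm_num at this
  exact this

/-- Example 8.7, explicit curve: for `y² + y = x³ + x + 1` over `F₂`,
every `α ∈ O_∞` is `(-2)`-approximable: `|α - f_n/g_n| < 4/|g_n|²`. -/
theorem neg_two_approximable_explicit_elliptic
    (ν : Valuation W2.toAffine.FunctionField ℤₘ₀)
    (hsurj : Function.Surjective ν)
    (hconst : ∀ c : ZMod 2, c ≠ 0 →
      ν (algebraMap W2.toAffine.CoordinateRing W2.toAffine.FunctionField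
        (algebraMap (ZMod 2) W2.toAffine.CoordinateRing c)) = 1)
    (hneg : ∀ a : W2.toAffine.CoordinateRing, (∀ c : ZMod 2, a ≠ algebraMap (ZMod 2) _ c) →
      1 < ν (algebraMap W2.toAffine.CoordinateRing W2.toAffine.FunctionField a))
    (hres : Nat.card (IsLocalRing.ResidueField ν.valuationSubring) = 2) :
    letI : Valued W2.toAffine.FunctionField ℤₘ₀ := Valued.mk' ν
    letI : Valued (UniformSpace.Completion W2.toAffine.FunctionField) ℤₘ₀ :=
      Valued.valuedCompletion
    ∀ α : UniformSpace.Completion W2.toAffine.FunctionField,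
      zabs 2 (Valued.v α) ≤ 1 →
      ∃ f g : ℕ → W2.toAffine.CoordinateRing,
        (∀ n, g n ≠ 0 ∧
          Ideal.span {f n, g n} = (⊤ : Ideal W2.toAffine.CoordinateRing) ∧
          zabs 2 (Valued.v (α -
            (UniformSpace.Completion.coe' (α := W2.toAffine.FunctionField)
              (algebraMap W2.toAffine.CoordinateRing W2.toAffine.FunctionField (f n) /
                algebraMap W2.toAffine.CoordinateRing W2.toAffine.FunctionField (g n))))) <
            (4 : ℝ) /
              zabs 2 (ν (algebraMap W2.toAffine.CoordinateRing W2.toAffine.FunctionField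
                (g n))) ^ 2) ∧
        Tendsto (fun n => UniformSpace.Completion.coe' (α := W2.toAffine.FunctionField)
            (algebraMap W2.toAffine.CoordinateRing W2.toAffine.FunctionField (f n) /
              algebraMap W2.toAffine.CoordinateRing W2.toAffine.FunctionField (g n)))
          atTop (nhds α) :=
  neg_two_approximable_explicit_elliptic_general ν hsurj hneg hres
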